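/- arXiv:2311.11408 — 3 statements merged into one kernel-verified Lean document; each statement's English description precedes it below -/
import Mathlib

section
/- Let k be a field with char k ≠ 2, 3, let a, b ∈ k with 4a³ + 27b² ≠ 0, and let t ∈ k satisfy t⁴a = a, t⁶b = b, t² ≠ 1 and t³ ≠ 1. If (x, y) ∈ k × k satisfies y² = x³ + a x + b, t²x = x and t³y = y, then x = 0, y = 0, b = 0 and t² = −1. (In particular an automorphism of order 4 fixes only the affine point (0,0), which lies only on curves with b = 0, and an automorphism with t⁴ ≠ 1 fixes no affine point.) -/
/-- Let `t` be an automorphism of the one-pointed smooth short Weierstrass curve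
`y² = x³ + a x + b` (i.e. `t⁴a = a` and `t⁶b = b`) with `t² ≠ 1` and `t³ ≠ 1`.
If `t` fixes the affine point `(x, y)` of the curve, then `x = 0`, `y = 0`, `b = 0`
and `t² = -1`. -/
theorem short_weierstrass_order_four_fixed_point {k : Type*} [Field k]
    (h2 : ringChar k ≠ 2) (h3 : ringChar k ≠ 3) (a b t : k)
    (hD : 4 * a ^ 3 + 27 * b ^ 2 ≠ 0)
    (ha : t ^ 4 * a = a) (hb : t ^ 6 * b = b)
    (ht2 : t ^ 2 ≠ 1) (ht3 : t ^ 3 ≠ 1)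
    (x y : k) (hP : y ^ 2 = x ^ 3 + a * x + b)
    (hx : t ^ 2 * x = x) (hy : t ^ 3 * y = y) :
    x = 0 ∧ y = 0 ∧ b = 0 ∧ t ^ 2 = -1 := by
  have hx0 : x = 0 := by
    by_contra h
    exact ht2 (mul_right_cancel₀ h (by rw [hx, one_mul]))
  have hy0 : y = 0 := by
    by_contra h
    exact ht3 (mul_right_cancel₀ h (by rw [hy, one_mul]))
  subst hx0 hy0
  have hb0 : b = 0 := by simpa using hP.symm
  subst hb0
  have ha0 : a ≠ 0 := by intro h; apply hD; rw [h]; ring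
  have ht4 : t ^ 4 = 1 := mul_right_cancel₀ ha0 (by rw [ha, one_mul])
  have hz : (t ^ 2 - 1) * (t ^ 2 + 1) = 0 := by linear_combination ht4
  rcases mul_eq_zero.mp hz with h | h
  · exact absurd (by linear_combination h) ht2
  · exact ⟨rfl, rfl, rfl, by linear_combination h⟩
end

section
/- Let k be a field with char k ≠ 2, let a, b ∈ k, and let t ∈ k with t ≠ 1, t⁴a = a and t⁶b = b. Suppose (x₂,y₂), (x₃,y₃), (x₄,y₄) are three pairwise distinct points of k × k, each satisfying yᵢ² = xᵢ³ + a xᵢ + b, t²xᵢ = xᵢ and t³yᵢ = yᵢ. Then t = −1 and y₂ = y₃ = y₄ = 0. (Thus every four-pointed elliptic curve with a nontrivial automorphism has the automorphism equal to the involution and the three affine marked points collinear, lying on the line y = 0.) -/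
/-- If a nontrivial automorphism `t` of the one-pointed short Weierstrass curve
`y² = x³ + a x + b` (over a field of characteristic different from `2`) fixes three
pairwise distinct affine points, then `t` is the involution `t = -1` and the three
points all lie on the line `y = 0`. -/
theorem short_weierstrass_four_pointed_automorphism {k : Type*} [Field k]
    (h2 : ringChar k ≠ 2) (a b t : k) (ht : t ≠ 1)
    (ha : t ^ 4 * a = a) (hb : t ^ 6 * b = b)
    (x₂ y₂ x₃ y₃ x₄ y₄ : k)
    (hne₂₃ : (x₂, y₂) ≠ (x₃, y₃)) (hne₂₄ : (x₂, y₂) ≠ (x₄, y₄))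
    (hne₃₄ : (x₃, y₃) ≠ (x₄, y₄))
    (hP₂ : y₂ ^ 2 = x₂ ^ 3 + a * x₂ + b ∧ t ^ 2 * x₂ = x₂ ∧ t ^ 3 * y₂ = y₂)
    (hP₃ : y₃ ^ 2 = x₃ ^ 3 + a * x₃ + b ∧ t ^ 2 * x₃ = x₃ ∧ t ^ 3 * y₃ = y₃)
    (hP₄ : y₄ ^ 2 = x₄ ^ 3 + a * x₄ + b ∧ t ^ 2 * x₄ = x₄ ∧ t ^ 3 * y₄ = y₄) :
    t = -1 ∧ y₂ = 0 ∧ y₃ = 0 ∧ y₄ = 0 := by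
  obtain ⟨e2, hx2, hy2⟩ := hP₂
  obtain ⟨e3, hx3, hy3⟩ := hP₃
  obtain ⟨e4, hx4, hy4⟩ := hP₄
  have h2' : (2 : k) ≠ 0 := by
    intro h
    exact h2 (CharP.ringChar_of_prime_eq_zero Nat.prime_two h)
  have htneg : t = -1 := by
    have key : ∀ x : k, t ^ 2 * x = x → x ≠ 0 → t = -1 := by
      intro x hx hx0
      have h1 : (t - 1) * (t + 1) * x = 0 := by ring_nf; linear_combination hx
      rcases mul_eq_zero.mp h1 with h | h
      · rcases mul_eq_zero.mp h with h | h
        · exact absurd (sub_eq_zero.mp h) ht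
        · exact eq_neg_of_add_eq_zero_left h
      · exact absurd h hx0
    by_cases h₂ : x₂ = 0
    · by_cases h₃ : x₃ = 0
      · by_cases h₄ : x₄ = 0
        · exfalso
          subst h₂ h₃ h₄
          have hb2 : y₂ ^ 2 = b := by linear_combination e2
          have hb3 : y₃ ^ 2 = b := by linear_combination e3
          have hb4 : y₄ ^ 2 = b := by linear_combination e4
          have d23 : y₂ ≠ y₃ := fun h => hne₂₃ (by simp [h])
          have d24 : y₂ ≠ y₄ := fun h => hne₂₄ (by simp [h])
          have d34 : y₃ ≠ y₄ := fun h => hne₃₄ (by simp [h])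
          have h23 : y₃ = -y₂ := by
            have : (y₂ - y₃) * (y₂ + y₃) = 0 := by linear_combination hb2 - hb3
            rcases mul_eq_zero.mp this with h | h
            · exact absurd (sub_eq_zero.mp h) d23
            · linear_combination h
          have h24 : y₄ = -y₂ := by
            have : (y₂ - y₄) * (y₂ + y₄) = 0 := by linear_combination hb2 - hb4
            rcases mul_eq_zero.mp this with h | h
            · exact absurd (sub_eq_zero.mp h) d24
            · linear_combination h
          exact d34 (h23.trans h24.symm)
        · exact key x₄ hx4 h₄
      · exact key x₃ hx3 h₃
    · exact key x₂ hx2 h₂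
  subst htneg
  refine ⟨rfl, ?_, ?_, ?_⟩
  · have : y₂ * 2 = 0 := by linear_combination -hy2
    exact (mul_eq_zero.mp this).resolve_right h2'
  · have : y₃ * 2 = 0 := by linear_combination -hy3
    exact (mul_eq_zero.mp this).resolve_right h2'
  · have : y₄ * 2 = 0 := by linear_combination -hy4
    exact (mul_eq_zero.mp this).resolve_right h2'
end

section
/- Let k be a field with char k ≠ 2, let a, b ∈ k, and let t ∈ k with t⁴a = a and t⁶b = b. Suppose (x₂,y₂), (x₃,y₃), (x₄,y₄), (x₅,y₅) are four pairwise distinct points of k × k, each satisfying yᵢ² = xᵢ³ + a xᵢ + b, t²xᵢ = xᵢ and t³yᵢ = yᵢ. Then t = 1. (Thus every n-pointed smooth elliptic curve with n ≥ 5 has no nontrivial automorphisms.) -/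
/-- If an automorphism `t` of the one-pointed short Weierstrass curve
`y² = x³ + a x + b` (over a field of characteristic different from `2`) fixes four
pairwise distinct affine points, then `t = 1`; thus an `n`-pointed smooth elliptic
curve with `n ≥ 5` has no nontrivial automorphisms. -/
theorem short_weierstrass_five_pointed_no_automorphism {k : Type*} [Field k]
    (h2 : ringChar k ≠ 2) (a b t : k)
    (ha : t ^ 4 * a = a) (hb : t ^ 6 * b = b)
    (x₂ y₂ x₃ y₃ x₄ y₄ x₅ y₅ : k)
    (hne₂₃ : (x₂, y₂) ≠ (x₃, y₃)) (hne₂₄ : (x₂, y₂) ≠ (x₄, y₄))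
    (hne₂₅ : (x₂, y₂) ≠ (x₅, y₅)) (hne₃₄ : (x₃, y₃) ≠ (x₄, y₄))
    (hne₃₅ : (x₃, y₃) ≠ (x₅, y₅)) (hne₄₅ : (x₄, y₄) ≠ (x₅, y₅))
    (hP₂ : y₂ ^ 2 = x₂ ^ 3 + a * x₂ + b ∧ t ^ 2 * x₂ = x₂ ∧ t ^ 3 * y₂ = y₂)
    (hP₃ : y₃ ^ 2 = x₃ ^ 3 + a * x₃ + b ∧ t ^ 2 * x₃ = x₃ ∧ t ^ 3 * y₃ = y₃)
    (hP₄ : y₄ ^ 2 = x₄ ^ 3 + a * x₄ + b ∧ t ^ 2 * x₄ = x₄ ∧ t ^ 3 * y₄ = y₄)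
    (hP₅ : y₅ ^ 2 = x₅ ^ 3 + a * x₅ + b ∧ t ^ 2 * x₅ = x₅ ∧ t ^ 3 * y₅ = y₅) :
    t = 1 := by
  by_contra ht
  obtain ⟨e₂, f₂, g₂⟩ := hP₂
  obtain ⟨e₃, f₃, g₃⟩ := hP₃
  obtain ⟨e₄, f₄, g₄⟩ := hP₄
  obtain ⟨e₅, f₅, g₅⟩ := hP₅
  have h2' : (2 : k) ≠ 0 := Ring.two_ne_zero h2
  by_cases hsq : t ^ 2 = 1
  · -- then t = -1, all yᵢ = 0
    have htm : t = -1 := by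
      have : (t - 1) * (t + 1) = 0 := by linear_combination hsq
      rcases mul_eq_zero.mp this with h | h
      · exact absurd (sub_eq_zero.mp h) ht
      · exact eq_neg_of_add_eq_zero_left h
    have hy : ∀ y : k, t ^ 3 * y = y → y = 0 := by
      intro y hy
      have : (2 : k) * y = 0 := by rw [htm] at hy; linear_combination -hy
      exact (mul_eq_zero.mp this).resolve_left h2'
    have hy₂ := hy y₂ g₂; have hy₃ := hy y₃ g₃
    have hy₄ := hy y₄ g₄; have hy₅ := hy y₅ g₅
    subst hy₂ hy₃ hy₄ hy₅
    have hx23 : x₂ - x₃ ≠ 0 := sub_ne_zero.mpr fun h => hne₂₃ (by simp [h])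
    have hx24 : x₂ - x₄ ≠ 0 := sub_ne_zero.mpr fun h => hne₂₄ (by simp [h])
    have hx25 : x₂ - x₅ ≠ 0 := sub_ne_zero.mpr fun h => hne₂₅ (by simp [h])
    have hx34 : x₃ - x₄ ≠ 0 := sub_ne_zero.mpr fun h => hne₃₄ (by simp [h])
    have s23 : x₂ ^ 2 + x₂ * x₃ + x₃ ^ 2 + a = 0 := by
      have key : (x₂ - x₃) * (x₂ ^ 2 + x₂ * x₃ + x₃ ^ 2 + a) = 0 := by
        linear_combination e₃ - e₂
      exact (mul_eq_zero.mp key).resolve_left hx23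
    have s24 : x₂ ^ 2 + x₂ * x₄ + x₄ ^ 2 + a = 0 := by
      have key : (x₂ - x₄) * (x₂ ^ 2 + x₂ * x₄ + x₄ ^ 2 + a) = 0 := by
        linear_combination e₄ - e₂
      exact (mul_eq_zero.mp key).resolve_left hx24
    have s25 : x₂ ^ 2 + x₂ * x₅ + x₅ ^ 2 + a = 0 := by
      have key : (x₂ - x₅) * (x₂ ^ 2 + x₂ * x₅ + x₅ ^ 2 + a) = 0 := by
        linear_combination e₅ - e₂
      exact (mul_eq_zero.mp key).resolve_left hx25
    have sum234 : x₂ + x₃ + x₄ = 0 := by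
      have key : (x₃ - x₄) * (x₂ + x₃ + x₄) = 0 := by
        linear_combination s23 - s24
      exact (mul_eq_zero.mp key).resolve_left hx34
    have sum235 : x₂ + x₃ + x₅ = 0 := by
      have hx35 : x₃ - x₅ ≠ 0 := sub_ne_zero.mpr fun h => hne₃₅ (by simp [h])
      have key : (x₃ - x₅) * (x₂ + x₃ + x₅) = 0 := by
        linear_combination s23 - s25
      exact (mul_eq_zero.mp key).resolve_left hx35
    exact hne₄₅ (Prod.ext (by linear_combination sum234 - sum235) rfl)
  · -- t² ≠ 1, all xᵢ = 0
    have hx : ∀ x : k, t ^ 2 * x = x → x = 0 := by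
      intro x hx
      have key : (t ^ 2 - 1) * x = 0 := by linear_combination hx
      exact (mul_eq_zero.mp key).resolve_left (sub_ne_zero.mpr hsq)
    have hx₂ := hx x₂ f₂; have hx₃ := hx x₃ f₃; have hx₄ := hx x₄ f₄
    subst hx₂ hx₃ hx₄
    have hy23 : y₂ - y₃ ≠ 0 := sub_ne_zero.mpr fun h => hne₂₃ (by simp [h])
    have hy24 : y₂ - y₄ ≠ 0 := sub_ne_zero.mpr fun h => hne₂₄ (by simp [h])
    have r3 : y₃ = -y₂ := by
      have key : (y₂ - y₃) * (y₂ + y₃) = 0 := by linear_combination e₂ - e₃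
      exact eq_neg_of_add_eq_zero_right ((mul_eq_zero.mp key).resolve_left hy23)
    have r4 : y₄ = -y₂ := by
      have key : (y₂ - y₄) * (y₂ + y₄) = 0 := by linear_combination e₂ - e₄
      exact eq_neg_of_add_eq_zero_right ((mul_eq_zero.mp key).resolve_left hy24)
    exact hne₃₄ (by simp [r3, r4])
end
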